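/- arXiv:0711.1148 — 6 statements merged into one kernel-verified Lean document; each statement's English description precedes it below -/
import Mathlib

section
/- Peierls estimate for an incorrect site of color 1: for every h ≥ 0, every β > 0 and every integer k with 1 ≤ k ≤ 2d − 1, one has (e^β − 1)^{−k/2} · b1(β, h) ≤ max(b0(β,h), b1(β,h), b2(β,h)) · (1 + (q − 1)e^{−h})^{−k/(2d)}; in particular, since k ≥ 1 and 1 + (q − 1)e^{−h} ≥ 1, the left-hand side is at most max(b0, b1, b2) · e^{−τ}, where e^{−τ} = (1 + (q − 1)e^{−h})^{−1/(2d)}. -/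
open Real

/-- Ground-state weight per site of the color-0 (disordered) state. -/
noncomputable def b0 (d : ℕ) (q β h : ℝ) : ℝ := exp (-β * d) * (q - 1 + exp h)

/-- Ground-state weight per site of the color-1 (field-aligned) state. -/
noncomputable def b1 (d : ℕ) (β h : ℝ) : ℝ := (1 - exp (-β)) ^ d * exp h

/-- Ground-state weight per site of the color-2 (orthogonal ordered) state. -/
noncomputable def b2 (d : ℕ) (β : ℝ) : ℝ := (1 - exp (-β)) ^ d

/-- The ground-state coexistence line `β₀(h) = ln(1 + (1 + (q-1)e^{-h})^{1/d})`. -/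
noncomputable def β₀ (d : ℕ) (q h : ℝ) : ℝ :=
  log (1 + (1 + (q - 1) * exp (-h)) ^ ((1 : ℝ) / d))

/-! The weights `b0` and `b1` share the factor `c = e^{-βd} e^h`: with `x = e^β - 1` and
`A = 1 + (q-1)e^{-h}` one has `b1 = c x^d` and `b0 = c A`. For `θ = k/(2d) ∈ [0,1]` the left-hand
side is `c (x^d)^{1-θ}`, and the weighted geometric mean `(x^d)^{1-θ} A^θ` is at most
`max(x^d, A)`, which gives the first bound; the second follows from `A ≥ 1` and `k ≥ 1`. -/

theorem rpow_one_sub_mul_rpow_le_max {y a θ : ℝ} (hy : 0 ≤ y) (ha : 0 ≤ a) (hθ0 : 0 ≤ θ)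
    (hθ1 : θ ≤ 1) : y ^ (1 - θ) * a ^ θ ≤ max y a := by
  have hM : 0 ≤ max y a := le_max_of_le_left hy
  calc y ^ (1 - θ) * a ^ θ ≤ max y a ^ (1 - θ) * max y a ^ θ := by
        have hθ1' : 0 ≤ 1 - θ := by linarith
        exact mul_le_mul (rpow_le_rpow hy (le_max_left y a) hθ1')
          (rpow_le_rpow ha (le_max_right y a) hθ0) (by positivity) (by positivity)
    _ = max y a := by rw [← rpow_add' hM (by simp), sub_add_cancel, rpow_one]

theorem b1_eq_mul (d : ℕ) (β h : ℝ) :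
    b1 d β h = exp (-β * d) * exp h * (exp β - 1) ^ d := by
  have hsub : 1 - exp (-β) = exp (-β) * (exp β - 1) := by
    rw [mul_sub, ← exp_add, neg_add_cancel, exp_zero, mul_one]
  rw [b1, hsub, mul_pow, ← exp_nat_mul, mul_comm (d : ℝ)]
  ring

theorem b0_eq_mul (d : ℕ) (q β h : ℝ) :
    b0 d q β h = exp (-β * d) * exp h * (1 + (q - 1) * exp (-h)) := by
  rw [b0, exp_neg]
  field_simp
  ring

theorem one_le_one_add_sub_one_mul_exp {q : ℝ} (hq : 1 ≤ q) (h : ℝ) :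
    1 ≤ 1 + (q - 1) * exp (-h) :=
  le_add_of_nonneg_right (mul_nonneg (sub_nonneg.2 hq) (exp_pos _).le)

theorem rpow_neg_half_mul_b1_le {d : ℕ} (hd : d ≠ 0) {q β s : ℝ} (h : ℝ) (hq : 1 ≤ q)
    (hβ : 0 < β) (hs0 : 0 ≤ s) (hs : s ≤ 2 * d) :
    (exp β - 1) ^ (-s / 2) * b1 d β h ≤
      max (b0 d q β h) (b1 d β h) * (1 + (q - 1) * exp (-h)) ^ (-s / (2 * d)) := by
  set x := exp β - 1
  set a := 1 + (q - 1) * exp (-h)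
  set θ := s / (2 * d) with hθ
  have hx : 0 < x := sub_pos.2 (one_lt_exp_iff.2 hβ)
  have ha : 0 < a := one_pos.trans_le (one_le_one_add_sub_one_mul_exp hq h)
  have hdR : (0 : ℝ) < d := by positivity
  have hθ0 : 0 ≤ θ := by positivity
  have hθ1 : θ ≤ 1 := (div_le_one (by positivity)).2 hs
  have hpow : x ^ (-s / 2) * x ^ d = (x ^ d) ^ (1 - θ) := by
    rw [← rpow_natCast, ← rpow_mul hx.le, ← rpow_add hx, hθ]
    congr 1
    field_simp
    ring
  calc x ^ (-s / 2) * b1 d β h = exp (-β * d) * exp h * (x ^ d) ^ (1 - θ) := by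
        rw [b1_eq_mul, ← hpow]; ring
    _ = exp (-β * d) * exp h * ((x ^ d) ^ (1 - θ) * a ^ θ) * a ^ (-θ) := by
        rw [mul_assoc _ (_ * a ^ θ), mul_assoc ((x ^ d) ^ (1 - θ)), ← rpow_add ha, add_neg_cancel,
          rpow_zero, mul_one]
    _ ≤ exp (-β * d) * exp h * max (x ^ d) a * a ^ (-θ) := by
        gcongr
        exact rpow_one_sub_mul_rpow_le_max (by positivity) ha.le hθ0 hθ1
    _ = max (b0 d q β h) (b1 d β h) * a ^ (-s / (2 * d)) := by
        rw [mul_max_of_nonneg _ _ (by positivity), b0_eq_mul, b1_eq_mul, max_comm, neg_div]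

theorem peierls_color_one_general (d : ℕ) (q h β : ℝ) (k : ℕ) (hq : 2 ≤ q)
    (hβ : 0 < β) (hk1 : 1 ≤ k) (hk2 : k ≤ 2 * d - 1) :
    (exp β - 1) ^ (-(k : ℝ) / 2) * b1 d β h ≤
        max (b0 d q β h) (max (b1 d β h) (b2 d β)) *
          (1 + (q - 1) * exp (-h)) ^ (-(k : ℝ) / (2 * d)) ∧
      (exp β - 1) ^ (-(k : ℝ) / 2) * b1 d β h ≤
        max (b0 d q β h) (max (b1 d β h) (b2 d β)) *
          (1 + (q - 1) * exp (-h)) ^ (-(1 : ℝ) / (2 * d)) := by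
  have hd : d ≠ 0 := by omega
  have hk : (k : ℝ) ≤ 2 * d := by exact_mod_cast (by omega : k ≤ 2 * d)
  have hq1 : 1 ≤ q := by linarith
  have hA := one_le_one_add_sub_one_mul_exp hq1 h
  have hmax : max (b0 d q β h) (b1 d β h) ≤ max (b0 d q β h) (max (b1 d β h) (b2 d β)) :=
    max_le_max le_rfl (le_max_left _ _)
  have hfirst := (rpow_neg_half_mul_b1_le hd h hq1 hβ k.cast_nonneg hk).trans
    (mul_le_mul_of_nonneg_right hmax (by positivity))
  refine ⟨hfirst, hfirst.trans ?_⟩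
  have hM : 0 ≤ max (b0 d q β h) (max (b1 d β h) (b2 d β)) :=
    le_max_of_le_left (by rw [b0_eq_mul]; positivity)
  gcongr
  exact_mod_cast hk1

/-- Peierls estimate for an incorrect site of color 1: if the site belongs to `k`
edges of color 0 (with `1 ≤ k ≤ 2d - 1`), its weight `(e^β - 1)^{-k/2} b1(β,h)` is
at most `max(b0,b1,b2) · (1+(q-1)e^{-h})^{-k/(2d)}`, and in particular at most
`max(b0,b1,b2) · e^{-τ}` with `e^{-τ} = (1+(q-1)e^{-h})^{-1/(2d)}`. -/
theorem peierls_color_one (d : ℕ) (q h β : ℝ) (k : ℕ) (hd : 2 ≤ d) (hq : 2 ≤ q)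
    (hh : 0 ≤ h) (hβ : 0 < β) (hk1 : 1 ≤ k) (hk2 : k ≤ 2 * d - 1) :
    (exp β - 1) ^ (-(k : ℝ) / 2) * b1 d β h ≤
        max (b0 d q β h) (max (b1 d β h) (b2 d β)) *
          (1 + (q - 1) * exp (-h)) ^ (-(k : ℝ) / (2 * d)) ∧
      (exp β - 1) ^ (-(k : ℝ) / 2) * b1 d β h ≤
        max (b0 d q β h) (max (b1 d β h) (b2 d β)) *
          (1 + (q - 1) * exp (-h)) ^ (-(1 : ℝ) / (2 * d)) :=
  peierls_color_one_general d q h β k hq hβ hk1 hk2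
end

section
/- Peierls estimate for an incorrect site of color 2: for every h ≥ 0, every β > 0 and every integer k with 1 ≤ k ≤ 2d − 1, one has (e^β − 1)^{−k/2} · b2(β, h) ≤ max(b0(β,h), b1(β,h), b2(β,h)) · (q − 1 + e^h)^{−k/(2d)}. -/
open Real

/-!
Write `x = e^β - 1` and `Q = q - 1 + e^h`. Then `b2 = e^{-βd} x^d` and `b0 = e^{-βd} Q`, and with
`y = x^d`, `s = -k/(2d) ∈ [-1, 0]` the claim reduces to `y^s · y ≤ max(Q, y) · Q^s`. If `Q ≤ y`
this holds because `t ↦ t^s` is antitone; if `y ≤ Q` because `t ↦ t^{s+1}` is monotone.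
-/

theorem rpow_mul_self_le_max_mul_rpow {y Q s : ℝ} (hy : 0 < y) (hQ : 0 < Q) (hs1 : -1 ≤ s)
    (hs0 : s ≤ 0) : y ^ s * y ≤ max Q y * Q ^ s := by
  rcases le_total Q y with hQy | hyQ
  · calc y ^ s * y ≤ Q ^ s * max Q y :=
          mul_le_mul (rpow_le_rpow_of_nonpos hQ hQy hs0) (le_max_right _ _) hy.le
            (rpow_nonneg hQ.le _)
      _ = max Q y * Q ^ s := mul_comm _ _
  · calc y ^ s * y = y ^ (s + 1) := (rpow_add_one hy.ne' s).symm
      _ ≤ Q ^ (s + 1) := rpow_le_rpow hy.le hyQ (by linarith)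
      _ = Q * Q ^ s := by rw [rpow_add_one hQ.ne', mul_comm]
      _ ≤ max Q y * Q ^ s := by gcongr; exact le_max_left _ _

theorem b2_eq_exp_mul_pow (d : ℕ) (β : ℝ) : b2 d β = exp (-β * d) * (exp β - 1) ^ d := by
  have h : 1 - exp (-β) = exp (-β) * (exp β - 1) := by
    rw [mul_sub, ← exp_add, neg_add_cancel, exp_zero, mul_one]
  rw [b2, h, mul_pow, ← exp_nat_mul, mul_comm (d : ℝ)]

theorem max_b0_b2_eq (d : ℕ) (q β h : ℝ) :
    max (b0 d q β h) (b2 d β) = exp (-β * d) * max (q - 1 + exp h) ((exp β - 1) ^ d) := by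
  rw [b2_eq_exp_mul_pow, b0, mul_max_of_nonneg _ _ (exp_pos _).le]

theorem peierls_color_two_general (d : ℕ) (q h β : ℝ) (k : ℕ) (hd : 2 ≤ d) (hq : 2 ≤ q)
    (hβ : 0 < β) (hk2 : k ≤ 2 * d - 1) :
    (exp β - 1) ^ (-(k : ℝ) / 2) * b2 d β ≤
      max (b0 d q β h) (max (b1 d β h) (b2 d β)) *
        (q - 1 + exp h) ^ (-(k : ℝ) / (2 * d)) := by
  set s := -(k : ℝ) / (2 * d)
  have hd0 : (0 : ℝ) < d := by exact_mod_cast (by omega : 0 < d)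
  have hx : 0 < exp β - 1 := sub_pos.2 (one_lt_exp_iff.2 hβ)
  have hQ : 0 < q - 1 + exp h := by linarith [exp_pos h]
  have hk : (k : ℝ) ≤ 2 * d := by exact_mod_cast (by omega : k ≤ 2 * d)
  have hs1 : -1 ≤ s := by rw [le_div_iff₀ (by positivity)]; linarith
  have hs0 : s ≤ 0 := div_nonpos_of_nonpos_of_nonneg (by simp) (by positivity)
  have hpow : (exp β - 1) ^ (-(k : ℝ) / 2) = ((exp β - 1) ^ d) ^ s := by
    rw [← rpow_natCast, ← rpow_mul hx.le]
    congr 1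
    simp only [s]
    field_simp
  calc (exp β - 1) ^ (-(k : ℝ) / 2) * b2 d β
        = exp (-β * d) * (((exp β - 1) ^ d) ^ s * (exp β - 1) ^ d) := by
          rw [hpow, b2_eq_exp_mul_pow]; ring
    _ ≤ exp (-β * d) * (max (q - 1 + exp h) ((exp β - 1) ^ d) * (q - 1 + exp h) ^ s) := by
          exact mul_le_mul_of_nonneg_left
            (rpow_mul_self_le_max_mul_rpow (by positivity) hQ hs1 hs0) (exp_pos _).le
    _ = max (b0 d q β h) (b2 d β) * (q - 1 + exp h) ^ s := by rw [max_b0_b2_eq]; ring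
    _ ≤ max (b0 d q β h) (max (b1 d β h) (b2 d β)) * (q - 1 + exp h) ^ s := by
          gcongr
          exact le_max_right _ _

/-- Peierls estimate for an incorrect site of color 2: if the site belongs to `k`
edges of color 0 (with `1 ≤ k ≤ 2d - 1`), its weight `(e^β - 1)^{-k/2} b2(β,h)` is
at most `max(b0,b1,b2) · (q-1+e^h)^{-k/(2d)}`. -/
theorem peierls_color_two (d : ℕ) (q h β : ℝ) (k : ℕ) (hd : 2 ≤ d) (hq : 2 ≤ q)
    (hh : 0 ≤ h) (hβ : 0 < β) (hk1 : 1 ≤ k) (hk2 : k ≤ 2 * d - 1) :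
    (exp β - 1) ^ (-(k : ℝ) / 2) * b2 d β ≤
      max (b0 d q β h) (max (b1 d β h) (b2 d β)) *
        (q - 1 + exp h) ^ (-(k : ℝ) / (2 * d)) :=
  peierls_color_two_general d q h β k hd hq hβ hk2
end

section
/- Tricolor edge representation identity: if n is a consistent edge tricoloring of a finite simple graph G, then summing the colored Edwards–Sokal weight over all spin configurations gives Σ_{σ : V → {1,…,q}} ω_CES(σ, n) = (Π_{e ∈ E} e^{−β·1{n(e)=0}} (1 − e^{−β})^{1{n(e)=1} + 1{n(e)=2}}) · e^{h·S1(n)} · (q − 1)^{C2(n)} · (q − 1 + e^h)^{|V| − S1(n) − S2(n)}. -/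
open Real
open scoped Classical

noncomputable section

/-- Real-valued indicator of a proposition. -/
def ind (P : Prop) : ℝ := if P then 1 else 0

variable {V : Type*} [Fintype V] [DecidableEq V] (G : SimpleGraph V)

/-- Both endpoints of the edge `e` carry the spin `1` (encoded as `0 : Fin q`),
i.e. they are aligned with the external field. -/
def BothOne {q : ℕ} [NeZero q] (σ : V → Fin q) (e : Sym2 V) : Prop :=
  ∀ v ∈ e, σ v = 0

/-- Both endpoints of the edge `e` carry equal spins. -/
def Mono {q : ℕ} (σ : V → Fin q) (e : Sym2 V) : Prop :=
  ∀ v ∈ e, ∀ w ∈ e, σ v = σ w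

/-- Both endpoints of the edge `e` carry equal spins different from `1`
(encoded as `0 : Fin q`). -/
def MonoNotOne {q : ℕ} [NeZero q] (σ : V → Fin q) (e : Sym2 V) : Prop :=
  Mono σ e ∧ ∀ v ∈ e, σ v ≠ 0

/-- The colored Edwards–Sokal weight of a spin configuration `σ` together with an
edge tricoloring `n` of the graph `G`, at inverse temperature `β` and field `h`. -/
def omegaCES (q : ℕ) [NeZero q] (β h : ℝ) (σ : V → Fin q)
    (n : G.edgeFinset → Fin 3) : ℝ :=
  (∏ e : G.edgeFinset,
      (exp (-β) * ind (n e = 0)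
        + (1 - exp (-β)) * ind (n e = 1) * ind (BothOne σ (e : Sym2 V))
        + (1 - exp (-β)) * ind (n e = 2) * ind (MonoNotOne σ (e : Sym2 V)))) *
    ∏ v : V, exp (h * ind (σ v = 0))

/-- `S1 n` (resp. `S2 n`): the number of vertices incident to at least one edge of
color `1` (resp. color `2`). -/
def S (G : SimpleGraph V) (n : G.edgeFinset → Fin 3) (c : Fin 3) : ℕ :=
  (Finset.univ.filter fun v : V => ∃ e : G.edgeFinset, n e = c ∧ v ∈ (e : Sym2 V)).card

/-- The graph on `V` whose edges are the edges of `G` colored `2` by `n`. -/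
def colorTwoGraph (n : G.edgeFinset → Fin 3) : SimpleGraph V where
  Adj a b := ∃ e : G.edgeFinset, n e = 2 ∧ (e : Sym2 V) = s(a, b)
  symm := by
    constructor
    rintro a b ⟨e, h2, he⟩
    exact ⟨e, h2, by rw [he, Sym2.eq_swap]⟩
  loopless := by
    constructor
    rintro a ⟨e, h2, he⟩
    have hd : ¬(e : Sym2 V).IsDiag :=
      G.not_isDiag_of_mem_edgeSet (SimpleGraph.mem_edgeFinset.mp e.2)
    rw [he] at hd
    exact hd (Sym2.mk_isDiag_iff.mpr rfl)

/-- `C2 n`: the number of connected components of the graph whose edge set is the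
set of edges colored `2` and whose vertex set is the set of their endpoints
(i.e. the components of `colorTwoGraph G n` containing at least one edge). -/
def C2 (n : G.edgeFinset → Fin 3) : ℕ :=
  Nat.card {c : (colorTwoGraph G n).ConnectedComponent //
    ∃ a, (colorTwoGraph G n).connectedComponentMk a = c ∧
      ∃ b, (colorTwoGraph G n).Adj a b}

/-- The tricolor-edge-representation weight of an edge tricoloring `n`. -/
def terWeight (q : ℕ) (β h : ℝ) (n : G.edgeFinset → Fin 3) : ℝ :=
  (∏ e : G.edgeFinset,
      exp (-β) ^ (if n e = 0 then 1 else 0 : ℕ) *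
        (1 - exp (-β)) ^
          ((if n e = 1 then 1 else 0) + (if n e = 2 then 1 else 0) : ℕ)) *
    exp (h * S G n 1) * ((q : ℝ) - 1) ^ C2 G n *
      ((q : ℝ) - 1 + exp h) ^ (Fintype.card V - S G n 1 - S G n 2)

/-- An edge tricoloring is consistent if no vertex is incident to both a
color-1 edge and a color-2 edge. -/
def Consistent (n : G.edgeFinset → Fin 3) : Prop :=
  ∀ v : V, ¬((∃ e : G.edgeFinset, n e = 1 ∧ v ∈ (e : Sym2 V)) ∧
             (∃ e : G.edgeFinset, n e = 2 ∧ v ∈ (e : Sym2 V)))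

/-! Once the edge coefficients are factored out, `ω_CES(σ, n)` is a product of one factor per
vertex, times the constraint that `σ` be constant along color-2 edges. Spin configurations
satisfying that constraint are functions of the connected components of the color-2 graph, so
the sum over `σ` factorizes over these components. A component containing a color-2 edge only
admits spins `≠ 1` (consistency keeps color-1 edges away from it), contributing `q - 1`; every
other component is a single vertex, contributing `e^h` if it touches a color-1 edge and
`q - 1 + e^h` if it touches no colored edge. -/

namespace SimpleGraph

omit [Fintype V] [DecidableEq V] in
lemma Reachable.apply_eq_of_forall_adj {β : Type*} {H : SimpleGraph V} {f : V → β}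
    (hf : ∀ a b, H.Adj a b → f a = f b) {u w : V} (huw : H.Reachable u w) : f u = f w := by
  rw [reachable_iff_reflTransGen] at huw
  exact Relation.reflTransGen_eq_self (α := β) (r := Eq) ▸ Relation.ReflTransGen.lift f hf _ _ huw

omit [Fintype V] [DecidableEq V] in
lemma IsIsolated.eq_of_reachable {H : SimpleGraph V} {u w : V} (hu : H.IsIsolated u)
    (huw : H.Reachable u w) : u = w := by
  rw [reachable_iff_reflTransGen] at huw
  obtain rfl | ⟨x, hux, -⟩ := huw.cases_head
  · rfl
  · exact absurd hux (hu x)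

lemma sum_prod_eq_prod_connectedComponent_sum {α R : Type*} [Fintype α] [DecidableEq α]
    [CommSemiring R] (H : SimpleGraph V) (f : V → α → R) :
    ∑ σ : V → α with ∀ a b, H.Adj a b → σ a = σ b, ∏ v, f v (σ v) =
      ∏ c : H.ConnectedComponent, ∑ s, ∏ v with H.connectedComponentMk v = c, f v s := by
  have himage : ({σ : V → α | ∀ a b, H.Adj a b → σ a = σ b} : Finset _) =
      Finset.univ.image (· ∘ H.connectedComponentMk) := by
    ext σ
    simp only [Finset.mem_filter, Finset.mem_univ, true_and, Finset.mem_image]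
    refine ⟨fun hσ => ⟨fun c => c.lift σ fun v w p _ => ?_, funext fun v => rfl⟩, ?_⟩
    · exact Reachable.apply_eq_of_forall_adj hσ ⟨p⟩
    · rintro ⟨τ, rfl⟩ a b hab
      exact congrArg τ (ConnectedComponent.sound hab.reachable)
  have hinj : Function.Injective (· ∘ H.connectedComponentMk : (H.ConnectedComponent → α) → _) :=
    Quot.mk_surjective.injective_comp_right
  rw [himage, Finset.sum_image hinj.injOn, Fintype.prod_sum]
  refine Finset.sum_congr rfl fun τ _ => ?_
  rw [← Finset.prod_fiberwise Finset.univ H.connectedComponentMk]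
  refine Finset.prod_congr rfl fun c _ => Finset.prod_congr rfl fun v hv => ?_
  rw [Function.comp_apply, (Finset.mem_filter.1 hv).2]

lemma IsIsolated.filter_connectedComponentMk_eq {H : SimpleGraph V} {v : V}
    (hv : H.IsIsolated v) :
    ({w | H.connectedComponentMk w = H.connectedComponentMk v} : Finset V) = {v} := by
  ext w
  simp only [Finset.mem_filter, Finset.mem_univ, true_and, Finset.mem_singleton,
    ConnectedComponent.eq]
  exact ⟨fun hwv => (hv.eq_of_reachable hwv.symm).symm, fun hwv => hwv ▸ Reachable.refl w⟩

end SimpleGraph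

lemma ind_congr {P Q : Prop} (h : P ↔ Q) : ind P = ind Q := by
  simp only [ind, h]

lemma ind_mul (P : Prop) (x : ℝ) : ind P * x = if P then x else 0 := by
  simp [ind]

lemma prod_ind {ι : Type*} [Fintype ι] (P : ι → Prop) : ∏ i, ind (P i) = ind (∀ i, P i) := by
  simp [ind, Finset.prod_boole]

lemma Fin.sum_eq_apply_zero_add_of_ne_zero {R : Type*} [AddCommGroupWithOne R] {q : ℕ} [NeZero q]
    (f : Fin q → R) (hf : ∀ s ≠ 0, f s = 1) : ∑ s, f s = f 0 + ((q : R) - 1) := by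
  rw [Fintype.sum_eq_add_sum_compl 0, Finset.sum_congr rfl fun s hs => hf s (by simpa using hs),
    Finset.sum_const, Finset.card_compl, Finset.card_singleton, Fintype.card_fin, nsmul_one,
    Nat.cast_sub NeZero.one_le, Nat.cast_one]

section Tricoloring

variable {G} (n : G.edgeFinset → Fin 3)

def coloredVertices (c : Fin 3) : Finset V :=
  Finset.univ.filter fun v : V => ∃ e : G.edgeFinset, n e = c ∧ v ∈ (e : Sym2 V)

lemma S_eq_card_coloredVertices (c : Fin 3) : S G n c = (coloredVertices n c).card := rfl

lemma forall_mem_coloredVertices_iff (c : Fin 3) (P : V → Prop) :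
    (∀ v ∈ coloredVertices n c, P v) ↔ ∀ e : G.edgeFinset, n e = c → ∀ v ∈ (e : Sym2 V), P v := by
  simp only [coloredVertices, Finset.mem_filter, Finset.mem_univ, true_and]
  exact ⟨fun h e he v hv => h v ⟨e, he, hv⟩, fun h v ⟨e, he, hv⟩ => h e he v hv⟩

lemma mem_coloredVertices_two_iff {v : V} :
    v ∈ coloredVertices n 2 ↔ ¬(colorTwoGraph G n).IsIsolated v := by
  simp only [coloredVertices, Finset.mem_filter, Finset.mem_univ, true_and,
    SimpleGraph.IsIsolated, colorTwoGraph, not_forall, not_not]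
  constructor
  · rintro ⟨e, he, hv⟩
    obtain ⟨w, hw⟩ := Sym2.mem_iff_exists.1 hv
    exact ⟨w, e, he, hw⟩
  · rintro ⟨w, e, he, hew⟩
    exact ⟨e, he, hew ▸ Sym2.mem_mk_left v w⟩

lemma disjoint_coloredVertices (hn : Consistent G n) :
    Disjoint (coloredVertices n 1) (coloredVertices n 2) := by
  simp only [Finset.disjoint_left, coloredVertices, Finset.mem_filter, Finset.mem_univ, true_and]
  exact fun v h1 h2 => hn v ⟨h1, h2⟩

lemma mem_coloredVertices_two_of_connectedComponentMk_eq {a b v : V}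
    (hab : (colorTwoGraph G n).Adj a b)
    (hva : (colorTwoGraph G n).connectedComponentMk v =
      (colorTwoGraph G n).connectedComponentMk a) :
    v ∈ coloredVertices n 2 := by
  rw [mem_coloredVertices_two_iff]
  intro hv
  exact hab.not_isIsolated_left (hv.eq_of_reachable (SimpleGraph.ConnectedComponent.exact hva) ▸ hv)

omit [DecidableEq V] in
lemma forall_mono_iff_forall_adj {q : ℕ} (σ : V → Fin q) :
    (∀ e : G.edgeFinset, n e = 2 → Mono σ (e : Sym2 V)) ↔
      ∀ a b, (colorTwoGraph G n).Adj a b → σ a = σ b := by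
  constructor
  · rintro h a b ⟨e, he, hab⟩
    exact h e he a (hab ▸ Sym2.mem_mk_left a b) b (hab ▸ Sym2.mem_mk_right a b)
  · intro h e he v hv w hw
    obtain ⟨v', hv'⟩ := Sym2.mem_iff_exists.1 hv
    have hadj : (colorTwoGraph G n).Adj v v' := ⟨e, he, hv'⟩
    rw [hv', Sym2.mem_iff] at hw
    rcases hw with rfl | rfl
    · rfl
    · exact h v w hadj

def edgeCoef (β : ℝ) (e : G.edgeFinset) : ℝ :=
  exp (-β) ^ (if n e = 0 then 1 else 0 : ℕ) *
    (1 - exp (-β)) ^ ((if n e = 1 then 1 else 0) + (if n e = 2 then 1 else 0) : ℕ)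

lemma edgeTerm_eq {q : ℕ} [NeZero q] (β : ℝ) (σ : V → Fin q) (e : G.edgeFinset) :
    exp (-β) * ind (n e = 0)
      + (1 - exp (-β)) * ind (n e = 1) * ind (BothOne σ (e : Sym2 V))
      + (1 - exp (-β)) * ind (n e = 2) * ind (MonoNotOne σ (e : Sym2 V)) =
    edgeCoef n β e * (ind (n e = 1 → BothOne σ (e : Sym2 V)) *
      ind (n e = 2 → Mono σ (e : Sym2 V)) * ind (n e = 2 → ∀ v ∈ (e : Sym2 V), σ v ≠ 0)) := by
  unfold edgeCoef MonoNotOne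
  generalize n e = c
  fin_cases c <;> simp [ind, ← ite_and, and_comm]

def vertexFactor (q : ℕ) (h : ℝ) (v : V) : ℝ :=
  if v ∈ coloredVertices n 1 then exp h
  else if v ∈ coloredVertices n 2 then 1 else (q : ℝ) - 1 + exp h

lemma vertexFactor_of_mem_two (hn : Consistent G n) (q : ℕ) (h : ℝ) {v : V}
    (hv : v ∈ coloredVertices n 2) : vertexFactor n q h v = 1 :=
  (if_neg (Finset.disjoint_right.1 (disjoint_coloredVertices n hn) hv)).trans (if_pos hv)

lemma prod_vertexFactor (hn : Consistent G n) (q : ℕ) (h : ℝ) :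
    ∏ v, vertexFactor n q h v =
      exp h ^ S G n 1 * ((q : ℝ) - 1 + exp h) ^ (Fintype.card V - S G n 1 - S G n 2) := by
  have hdisj := disjoint_coloredVertices n hn
  have h1 : ∀ v ∈ coloredVertices n 1, vertexFactor n q h v = exp h := fun v hv => if_pos hv
  have hfree : ∀ v ∈ (coloredVertices n 1 ∪ coloredVertices n 2)ᶜ,
      vertexFactor n q h v = (q : ℝ) - 1 + exp h := fun v hv => by
    simp only [Finset.mem_compl, Finset.mem_union, not_or] at hv
    exact (if_neg hv.1).trans (if_neg hv.2)
  rw [← Finset.prod_mul_prod_compl (coloredVertices n 1 ∪ coloredVertices n 2),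
    Finset.prod_union hdisj, Finset.prod_congr rfl h1,
    Finset.prod_congr rfl fun v => vertexFactor_of_mem_two n hn q h, Finset.prod_congr rfl hfree,
    Finset.prod_const, Finset.prod_const, Finset.prod_const, one_pow, mul_one, Finset.card_compl,
    Finset.card_union_of_disjoint hdisj, S_eq_card_coloredVertices, S_eq_card_coloredVertices,
    Nat.sub_sub]

variable {q : ℕ} [NeZero q]

def vertexWeight (h : ℝ) (v : V) (s : Fin q) : ℝ :=
  ind (v ∈ coloredVertices n 1 → s = 0) * ind (v ∈ coloredVertices n 2 → s ≠ 0) *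
    exp (h * ind (s = 0))

lemma omegaCES_eq (β h : ℝ) (σ : V → Fin q) :
    omegaCES G q β h σ n = (∏ e, edgeCoef n β e) *
      (ind (∀ a b, (colorTwoGraph G n).Adj a b → σ a = σ b) * ∏ v, vertexWeight n h v (σ v)) := by
  have h1 := ind_congr (forall_mem_coloredVertices_iff n 1 (σ · = 0))
  have h2 := ind_congr (forall_mem_coloredVertices_iff n 2 (σ · ≠ 0))
  have hmono := ind_congr (forall_mono_iff_forall_adj n σ)
  rw [omegaCES, Finset.prod_congr rfl fun e _ => edgeTerm_eq n β σ e]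
  simp only [vertexWeight, Finset.prod_mul_distrib, prod_ind]
  rw [h1, h2, ← hmono]
  unfold BothOne
  ring

lemma vertexWeight_of_mem_two (hn : Consistent G n) (h : ℝ) {v : V}
    (hv : v ∈ coloredVertices n 2) (s : Fin q) : vertexWeight n h v s = ind (s ≠ 0) := by
  have hv1 : v ∉ coloredVertices n 1 := Finset.disjoint_right.1 (disjoint_coloredVertices n hn) hv
  by_cases hs : s = 0 <;> simp [vertexWeight, ind, hv, hv1, hs]

lemma sum_vertexWeight_of_not_mem_two (h : ℝ) {v : V} (hv : v ∉ coloredVertices n 2) :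
    ∑ s : Fin q, vertexWeight n h v s = vertexFactor n q h v := by
  by_cases hv1 : v ∈ coloredVertices n 1
  · simp [vertexWeight, vertexFactor, ind, hv, hv1]
  · rw [Fin.sum_eq_apply_zero_add_of_ne_zero _ fun s hs => by
      simp [vertexWeight, ind, hv, hv1, hs]]
    simp [vertexWeight, vertexFactor, ind, hv, hv1, add_comm]

lemma sum_prod_vertexWeight_of_adj (hn : Consistent G n) (h : ℝ) {a b : V}
    (hab : (colorTwoGraph G n).Adj a b) :
    ∑ s : Fin q, ∏ v with (colorTwoGraph G n).connectedComponentMk v =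
      (colorTwoGraph G n).connectedComponentMk a, vertexWeight n h v s = (q : ℝ) - 1 := by
  have hfiber : ∀ s : Fin q, ∀ v ∈ ({v | (colorTwoGraph G n).connectedComponentMk v =
      (colorTwoGraph G n).connectedComponentMk a} : Finset V), vertexWeight n h v s = ind (s ≠ 0) :=
    fun s v hv => vertexWeight_of_mem_two n hn h
      (mem_coloredVertices_two_of_connectedComponentMk_eq n hab (Finset.mem_filter.1 hv).2) s
  rw [Fin.sum_eq_apply_zero_add_of_ne_zero _ fun s hs => Finset.prod_eq_one fun v hv => by
      simp [hfiber s v hv, ind, hs],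
    Finset.prod_eq_zero (i := a) (by simp) (by simp [hfiber 0 a (by simp), ind]), zero_add]

lemma prod_connectedComponent_sum_prod_vertexWeight (hn : Consistent G n) (h : ℝ) :
    ∏ c, ∑ s : Fin q, ∏ v with (colorTwoGraph G n).connectedComponentMk v = c,
      vertexWeight n h v s = ((q : ℝ) - 1) ^ C2 G n * ∏ v, vertexFactor n q h v := by
  have hcomponent : ∀ c, ∑ s : Fin q, ∏ v with (colorTwoGraph G n).connectedComponentMk v = c,
      vertexWeight n h v s = (if ∃ a, (colorTwoGraph G n).connectedComponentMk a = c ∧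
        ∃ b, (colorTwoGraph G n).Adj a b then (q : ℝ) - 1 else 1) *
      ∏ v with (colorTwoGraph G n).connectedComponentMk v = c, vertexFactor n q h v := by
    intro c
    induction c using SimpleGraph.ConnectedComponent.ind with | h v => ?_
    split_ifs with hc
    · obtain ⟨a, ha, b, hab⟩ := hc
      rw [← ha, sum_prod_vertexWeight_of_adj n hn h hab, Finset.prod_eq_one fun v hv =>
        vertexFactor_of_mem_two n hn q h
          (mem_coloredVertices_two_of_connectedComponentMk_eq n hab (Finset.mem_filter.1 hv).2),
        mul_one]
    · have hv : (colorTwoGraph G n).IsIsolated v := fun w hvw => hc ⟨v, rfl, w, hvw⟩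
      simp only [hv.filter_connectedComponentMk_eq, one_mul, Finset.prod_singleton]
      exact sum_vertexWeight_of_not_mem_two n h ((mem_coloredVertices_two_iff n).not_left.2 hv)
  rw [Finset.prod_congr rfl fun c _ => hcomponent c, Finset.prod_mul_distrib, Finset.prod_ite,
    Finset.prod_const, Finset.prod_const_one, mul_one, C2, Nat.card_eq_fintype_card,
    Fintype.card_subtype]
  congr 1
  convert Finset.prod_fiberwise Finset.univ (colorTwoGraph G n).connectedComponentMk _

end Tricoloring

theorem sum_omegaCES_eq_terWeight (q : ℕ) [NeZero q] (β h : ℝ)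
    (n : G.edgeFinset → Fin 3) (hn : Consistent G n) :
    ∑ σ : V → Fin q, omegaCES G q β h σ n = terWeight G q β h n := by
  calc ∑ σ : V → Fin q, omegaCES G q β h σ n
      = (∏ e, edgeCoef n β e) * ∑ σ : V → Fin q with
          ∀ a b, (colorTwoGraph G n).Adj a b → σ a = σ b, ∏ v, vertexWeight n h v (σ v) := by
        simp only [omegaCES_eq, ind_mul, ← Finset.mul_sum, Finset.sum_filter]
        congr!
    _ = (∏ e, edgeCoef n β e) * (((q : ℝ) - 1) ^ C2 G n * ∏ v, vertexFactor n q h v) := by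
        rw [SimpleGraph.sum_prod_eq_prod_connectedComponent_sum,
          prod_connectedComponent_sum_prod_vertexWeight n hn]
    _ = terWeight G q β h n := by
        rw [prod_vertexFactor n hn, terWeight, mul_comm h, Real.exp_nat_mul]
        unfold edgeCoef
        ring
end
end

section
/- If an edge tricoloring n of a finite simple graph G is not consistent, i.e. some vertex is incident to both an edge of color 1 and an edge of color 2, then the colored Edwards–Sokal weight vanishes after summing over spins: Σ_{σ : V → {1,…,q}} ω_CES(σ, n) = 0. -/
open Real
open scoped Classical

noncomputable section

variable {V : Type*} [Fintype V] [DecidableEq V] (G : SimpleGraph V)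

section

omit [DecidableEq V]

variable {q : ℕ} [NeZero q] {β h : ℝ} {σ : V → Fin q} {n : G.edgeFinset → Fin 3}

theorem omegaCES_eq_zero_of_color_one_of_not_bothOne {e : G.edgeFinset} (he : n e = 1)
    (hσ : ¬ BothOne σ (e : Sym2 V)) : omegaCES G q β h σ n = 0 :=
  mul_eq_zero_of_left (Finset.prod_eq_zero (Finset.mem_univ e) (by simp [ind, he, hσ])) _

theorem omegaCES_eq_zero_of_color_two_of_not_monoNotOne {e : G.edgeFinset} (he : n e = 2)
    (hσ : ¬ MonoNotOne σ (e : Sym2 V)) : omegaCES G q β h σ n = 0 :=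
  mul_eq_zero_of_left (Finset.prod_eq_zero (Finset.mem_univ e) (by simp [ind, he, hσ])) _

/-- At a vertex `v` met by edges of both colors, the color-1 edge needs `σ v = 1` and the
color-2 edge needs `σ v ≠ 1`. -/
theorem omegaCES_eq_zero_of_not_consistent (hn : ¬ Consistent G n) :
    omegaCES G q β h σ n = 0 := by
  simp only [Consistent, not_forall, not_not] at hn
  obtain ⟨v, ⟨e₁, he₁, hv₁⟩, ⟨e₂, he₂, hv₂⟩⟩ := hn
  by_cases hσv : σ v = 0
  · exact omegaCES_eq_zero_of_color_two_of_not_monoNotOne G he₂ fun hm => hm.2 v hv₂ hσv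
  · exact omegaCES_eq_zero_of_color_one_of_not_bothOne G he₁ fun hb => hσv (hb v hv₁)

end

theorem sum_omegaCES_eq_zero_of_not_consistent (q : ℕ) [NeZero q]
    (β h : ℝ) (n : G.edgeFinset → Fin 3) (hn : ¬ Consistent G n) :
    ∑ σ : V → Fin q, omegaCES G q β h σ n = 0 :=
  Finset.sum_eq_zero fun _ _ => omegaCES_eq_zero_of_not_consistent G hn

end
end

section
/- Edwards–Sokal marginal identity: for a finite simple graph G, a fixed spin configuration σ : V → {1,…,q} and β > 0, summing the Edwards–Sokal weight over all bond configurations recovers the Potts weight: Σ_{η : E → {0,1}} Π_{{i,j} ∈ E} [e^{−β} 1{η({i,j})=0} + (1 − e^{−β}) 1{η({i,j})=1} 1{σ_i = σ_j}] = Π_{{i,j} ∈ E} e^{β(1{σ_i = σ_j} − 1)}. -/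
open Real
open scoped Classical

noncomputable section

variable {V : Type*} [Fintype V] [DecidableEq V] (G : SimpleGraph V)

theorem exp_mul_ind_sub_one (β : ℝ) (P : Prop) :
    exp (β * (ind P - 1)) = exp (-β) + (1 - exp (-β)) * ind P := by
  by_cases hP : P <;> simp [ind, hP, mul_neg]

theorem sum_fin_two_bond_weight (p : ℝ) (P : Prop) :
    ∑ j : Fin 2, (p * ind (j = 0) + (1 - p) * ind (j = 1) * ind P) = p + (1 - p) * ind P := by
  simp [Fin.sum_univ_two, ind]

theorem sum_ES_bond_eq_potts (q : ℕ) (β : ℝ)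
    (σ : V → Fin q) :
    ∑ η : G.edgeFinset → Fin 2,
        ∏ e : G.edgeFinset,
          (exp (-β) * ind (η e = 0)
            + (1 - exp (-β)) * ind (η e = 1) * ind (Mono σ (e : Sym2 V))) =
      ∏ e : G.edgeFinset, exp (β * (ind (Mono σ (e : Sym2 V)) - 1)) := by
  rw [← Fintype.prod_sum (fun (e : G.edgeFinset) (j : Fin 2) =>
    exp (-β) * ind (j = 0) + (1 - exp (-β)) * ind (j = 1) * ind (Mono σ (e : Sym2 V)))]
  refine Finset.prod_congr rfl fun e _ => ?_
  rw [sum_fin_two_bond_weight, exp_mul_ind_sub_one]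

end
end

section
/- Component-counting bound on ℤ^d: let E be a finite nonempty set of nearest-neighbour edges of the lattice ℤ^d (d ≥ 2), let V(E) be the set of endpoints of edges of E, and for v ∈ V(E) let deg_E(v) be the number of edges of E containing v. Then the number of connected components of the graph (V(E), E) is at most Σ_{v ∈ V(E)} 2^{−deg_E(v)}. -/
open scoped Classical

noncomputable section

/-- The finite set of endpoints of a finite set `E` of edges (unordered pairs). -/
def endpoints {α : Type*} [DecidableEq α] (E : Finset (Sym2 α)) : Finset α :=
  E.biUnion fun e =>
    Sym2.lift ⟨fun a b => ({a, b} : Finset α), fun a b => Finset.pair_comm a b⟩ e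

/-- The degree of a vertex `v` in the edge set `E`: the number of edges of `E`
containing `v`. -/
def edgeDeg {α : Type*} (E : Finset (Sym2 α)) (v : α) : ℕ :=
  (E.filter fun e => v ∈ e).card

/-- The graph with vertex set the endpoints of `E` and edge set `E`. -/
def edgeGraph {α : Type*} [DecidableEq α] (E : Finset (Sym2 α)) :
    SimpleGraph {v // v ∈ endpoints E} where
  Adj a b := (a : α) ≠ (b : α) ∧ s((a : α), (b : α)) ∈ E
  symm := by
    refine ⟨?_⟩
    rintro a b ⟨hne, he⟩
    exact ⟨hne.symm, by rwa [Sym2.eq_swap]⟩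
  loopless := by
    refine ⟨?_⟩
    rintro a ⟨hne, -⟩
    exact hne rfl

/-!
For a finite set `S` of vertices let `w(S) = ∑_{v ∈ S} 2^{-deg_S v}` (`degWeight`), degrees
taken in the induced subgraph. The key fact is `w(S) ≥ 1` for every nonempty finite `S ⊆ ℤ^d`.
On `ℤ` this holds because the largest element of `S` has at most one neighbour in `S`, and adding
a vertex with at most one neighbour never decreases `w`. It passes from `G` and `H` to the box
product `G □ H` (hence from `ℤ^d` to `ℤ^(d+1)`): a vertex `(x, b)` has at most
`deg(x) + deg(b)` neighbours, so the fibre of `S` over `x` contributes at least `2^{-deg x}` times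
the (`≥ 1`) weight of that fibre. Finally every vertex of a component `C` of `(V(E), E)` has
`deg_E` at most its lattice degree inside `C`, so each component contributes at least `1`.
-/

open Finset

namespace SimpleGraph

variable {α β V : Type*}

def degWeight (G : SimpleGraph α) (S : Finset α) : ℝ :=
  ∑ v ∈ S, ((2 : ℝ) ^ #{w ∈ S | G.Adj v w})⁻¹

variable {G : SimpleGraph α}

lemma degWeight_singleton (v : α) : G.degWeight {v} = 1 := by
  simp [degWeight, filter_singleton]

lemma degWeight_add_le_degWeight_insert {S : Finset α} {v : α} (hv : v ∉ S) :
    G.degWeight S + ((2 : ℝ) ^ #{w ∈ S | G.Adj v w})⁻¹ - #{w ∈ S | G.Adj v w} / 2 ≤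
      G.degWeight (insert v S) := by
  have hterm : ∀ w ∈ S, ((2 : ℝ) ^ #{x ∈ S | G.Adj w x})⁻¹ - (if G.Adj v w then 1 / 2 else 0) ≤
      ((2 : ℝ) ^ #{x ∈ insert v S | G.Adj w x})⁻¹ := by
    intro w hw
    rw [filter_insert]
    by_cases hvw : G.Adj v w
    · have hle : ((2 : ℝ) ^ #{x ∈ S | G.Adj w x})⁻¹ ≤ 1 :=
        inv_le_one_of_one_le₀ (one_le_pow₀ one_le_two)
      rw [if_pos hvw, if_pos hvw.symm, card_insert_of_notMem (fun h => hv (mem_filter.1 h).1),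
        pow_succ, mul_inv]
      linarith
    · have hwv : ¬G.Adj w v := fun h => hvw h.symm
      rw [if_neg hvw, if_neg hwv, sub_zero]
  have hv' : #{w ∈ insert v S | G.Adj v w} = #{w ∈ S | G.Adj v w} := by
    rw [filter_insert, if_neg (G.loopless.irrefl v)]
  calc G.degWeight S + ((2 : ℝ) ^ #{w ∈ S | G.Adj v w})⁻¹ - #{w ∈ S | G.Adj v w} / 2
      = ((2 : ℝ) ^ #{w ∈ S | G.Adj v w})⁻¹ +
          ∑ w ∈ S, (((2 : ℝ) ^ #{x ∈ S | G.Adj w x})⁻¹ - if G.Adj v w then 1 / 2 else 0) := by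
        rw [sum_sub_distrib, ← sum_filter, sum_const, nsmul_eq_mul, degWeight]
        ring
    _ ≤ G.degWeight (insert v S) := by
        rw [degWeight, sum_insert hv, hv']
        gcongr with w hw
        exact hterm w hw

theorem one_le_degWeight_of_exists_card_adj_le_one
    (h : ∀ S : Finset α, S.Nonempty → ∃ v ∈ S, #{w ∈ S | G.Adj v w} ≤ 1)
    (S : Finset α) (hS : S.Nonempty) : 1 ≤ G.degWeight S := by
  induction S using Finset.strongInduction with
  | H S ih =>
    obtain ⟨v, hvS, hv⟩ := h S hS
    rw [← insert_erase hvS]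
    rcases (S.erase v).eq_empty_or_nonempty with hT | hT
    · rw [hT, insert_empty, degWeight_singleton]
    have hn : #{w ∈ S.erase v | G.Adj v w} ≤ 1 :=
      (card_le_card (filter_subset_filter _ (erase_subset v S))).trans hv
    have hgain : (0 : ℝ) ≤ ((2 : ℝ) ^ #{w ∈ S.erase v | G.Adj v w})⁻¹ -
        #{w ∈ S.erase v | G.Adj v w} / 2 := by
      interval_cases #{w ∈ S.erase v | G.Adj v w} <;> norm_num
    linarith [ih _ (erase_ssubset hvS) hT,
      degWeight_add_le_degWeight_insert (G := G) (notMem_erase v S)]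

theorem one_le_degWeight_hasse [LinearOrder α] (S : Finset α) (hS : S.Nonempty) :
    1 ≤ (hasse α).degWeight S := by
  refine one_le_degWeight_of_exists_card_adj_le_one
    (fun T hT => ⟨T.max' hT, T.max'_mem hT, card_le_one.2 fun a ha b hb => ?_⟩) S hS
  simp only [mem_filter, hasse_adj] at ha hb
  have hcov : ∀ {c}, c ∈ T → (T.max' hT ⋖ c ∨ c ⋖ T.max' hT) → c ⋖ T.max' hT := fun hc h =>
    h.resolve_left fun h' => h'.lt.not_ge (T.le_max' _ hc)
  exact (hcov ha.1 ha.2).unique_left (hcov hb.1 hb.2)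

lemma degWeight_map_le {H : SimpleGraph β} (f : β ↪ α) (hf : H ≤ G.comap f) (S : Finset β) :
    G.degWeight (S.map f) ≤ H.degWeight S := by
  rw [degWeight, degWeight, sum_map]
  refine sum_le_sum fun v _ => inv_pow_le_inv_pow_of_le one_le_two ?_
  calc #{w ∈ S | H.Adj v w} = #(({w ∈ S | H.Adj v w}).map f) := (card_map f).symm
    _ ≤ #{w ∈ S.map f | G.Adj (f v) w} := by
        refine card_le_card fun w hw => ?_
        obtain ⟨u, hu, rfl⟩ := mem_map.1 hw
        rw [mem_filter] at hu ⊢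
        exact ⟨mem_map_of_mem f hu.1, hf hu.2⟩

lemma one_le_degWeight_of_le_comap {H : SimpleGraph β}
    (hG : ∀ S : Finset α, S.Nonempty → 1 ≤ G.degWeight S) (f : β ↪ α) (hf : H ≤ G.comap f)
    (S : Finset β) (hS : S.Nonempty) : 1 ≤ H.degWeight S :=
  (hG _ hS.map).trans (degWeight_map_le f hf S)

lemma card_adj_boxProd_le {H : SimpleGraph β} (S : Finset (α × β)) (p : α × β) :
    #{q ∈ S | (G □ H).Adj p q} ≤
      #{x ∈ S.image Prod.fst | G.Adj p.1 x} +
        #{b ∈ {q ∈ S | q.1 = p.1}.image Prod.snd | H.Adj p.2 b} := by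
  calc #{q ∈ S | (G □ H).Adj p q}
      ≤ #({x ∈ S.image Prod.fst | G.Adj p.1 x} ×ˢ {p.2} ∪
          {p.1} ×ˢ {b ∈ {q ∈ S | q.1 = p.1}.image Prod.snd | H.Adj p.2 b}) := by
        refine card_le_card fun q hq => ?_
        obtain ⟨hqS, hadj⟩ := mem_filter.1 hq
        rcases boxProd_adj.1 hadj with ⟨hG, h2⟩ | ⟨hH, h1⟩
        · exact mem_union_left _ (mem_product.2
            ⟨mem_filter.2 ⟨mem_image_of_mem _ hqS, hG⟩, mem_singleton.2 h2.symm⟩)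
        · exact mem_union_right _ (mem_product.2 ⟨mem_singleton.2 h1.symm,
            mem_filter.2 ⟨mem_image_of_mem _ (mem_filter.2 ⟨hqS, h1.symm⟩), hH⟩⟩)
    _ ≤ _ := by
        refine (card_union_le _ _).trans_eq ?_
        rw [card_product, card_product, card_singleton, card_singleton, mul_one, one_mul]

theorem degWeight_image_fst_le_degWeight_boxProd {H : SimpleGraph β}
    (hH : ∀ T : Finset β, T.Nonempty → 1 ≤ H.degWeight T) (S : Finset (α × β)) :
    G.degWeight (S.image Prod.fst) ≤ (G □ H).degWeight S := by
  set P := S.image Prod.fst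
  set F : α → Finset β := fun x => {q ∈ S | q.1 = x}.image Prod.snd
  have hS : ∀ q : α × β, q ∈ S ↔ q.1 ∈ P ∧ q.2 ∈ F q.1 := fun q => by
    simpa [P, F] using fun h => ⟨q.2, h⟩
  calc G.degWeight P
      = ∑ x ∈ P, ((2 : ℝ) ^ #{y ∈ P | G.Adj x y})⁻¹ * 1 := by simp only [mul_one, degWeight]
    _ ≤ ∑ x ∈ P, ((2 : ℝ) ^ #{y ∈ P | G.Adj x y})⁻¹ * H.degWeight (F x) := by
        gcongr with x hx
        obtain ⟨q, hq, rfl⟩ := mem_image.1 hx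
        exact hH _ ⟨q.2, mem_image_of_mem _ (mem_filter.2 ⟨hq, rfl⟩)⟩
    _ = ∑ x ∈ P, ∑ b ∈ F x, ((2 : ℝ) ^ (#{y ∈ P | G.Adj x y} + #{c ∈ F x | H.Adj b c}))⁻¹ := by
        simp only [degWeight, mul_sum, pow_add, mul_inv]
    _ ≤ ∑ x ∈ P, ∑ b ∈ F x, ((2 : ℝ) ^ #{q ∈ S | (G □ H).Adj (x, b) q})⁻¹ := by
        gcongr with x _ b _
        exacts [one_le_two, card_adj_boxProd_le S (x, b)]
    _ = (G □ H).degWeight S := by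
        rw [degWeight, sum_finset_product S P F hS]

theorem one_le_degWeight_boxProd {H : SimpleGraph β}
    (hG : ∀ S : Finset α, S.Nonempty → 1 ≤ G.degWeight S)
    (hH : ∀ T : Finset β, T.Nonempty → 1 ≤ H.degWeight T)
    (S : Finset (α × β)) (hS : S.Nonempty) : 1 ≤ (G □ H).degWeight S :=
  (hG _ (hS.image _)).trans (degWeight_image_fst_le_degWeight_boxProd hH S)

theorem card_connectedComponent_le_sum [Fintype V] {H : SimpleGraph V}
    (hH : ∀ S : Finset V, S.Nonempty → 1 ≤ H.degWeight S) :
    (Nat.card H.ConnectedComponent : ℝ) ≤ ∑ v, ((2 : ℝ) ^ H.degree v)⁻¹ := by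
  set T : H.ConnectedComponent → Finset V := fun c => {v | H.connectedComponentMk v = c}
  have hT : ∀ c, H.degWeight (T c) = ∑ v ∈ T c, ((2 : ℝ) ^ H.degree v)⁻¹ := by
    refine fun c => sum_congr rfl fun v hv => ?_
    congr 2
    rw [← card_neighborFinset_eq_degree]
    congr 1
    ext w
    simp only [T, mem_filter, mem_univ, true_and, mem_neighborFinset] at hv ⊢
    exact ⟨And.right, fun h => ⟨(ConnectedComponent.sound h.reachable.symm).trans hv, h⟩⟩
  have := Fintype.ofFinite H.ConnectedComponent
  calc (Nat.card H.ConnectedComponent : ℝ) = ∑ _c : H.ConnectedComponent, 1 := by simp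
    _ ≤ ∑ c, H.degWeight (T c) :=
        sum_le_sum fun c _ => hH _ <| c.ind fun v => ⟨v, by simp [T]⟩
    _ = ∑ v, ((2 : ℝ) ^ H.degree v)⁻¹ := by
        simp only [hT, T]
        exact sum_fiberwise univ _ _

end SimpleGraph

def latticeGraph (d : ℕ) : SimpleGraph (Fin d → ℤ) where
  Adj a b := ∑ k, (a k - b k) ^ 2 = 1
  symm := ⟨fun a b h => by simpa only [← neg_sub (a _), neg_sq] using h⟩
  loopless := ⟨fun a h => by simp at h⟩

open SimpleGraph

lemma hasse_int_adj_of_sq_sub_eq_one {x y : ℤ} (h : (x - y) ^ 2 = 1) : (hasse ℤ).Adj x y := by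
  rw [hasse_adj, Order.covBy_iff_add_one_eq, Order.covBy_iff_add_one_eq]
  rcases sq_eq_one_iff.1 h with h | h <;> omega

lemma eq_of_sum_sq_sub_eq_zero {ι : Type*} [Fintype ι] {a b : ι → ℤ}
    (h : ∑ k, (a k - b k) ^ 2 = 0) : a = b := by
  rw [sum_eq_zero_iff_of_nonneg fun k _ => sq_nonneg _] at h
  exact funext fun k => sub_eq_zero.1 (pow_eq_zero_iff two_ne_zero |>.1 (h k (mem_univ k)))

lemma latticeGraph_succ_le_comap (d : ℕ) :
    latticeGraph (d + 1) ≤ (hasse ℤ □ latticeGraph d).comap (Fin.consEquiv fun _ => ℤ).symm := by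
  intro a b (h : ∑ k, (a k - b k) ^ 2 = 1)
  rw [Fin.sum_univ_succ] at h
  have h0 := sq_nonneg (a 0 - b 0)
  have htail : 0 ≤ ∑ k : Fin d, (a k.succ - b k.succ) ^ 2 := sum_nonneg fun k _ => sq_nonneg _
  change (hasse ℤ □ latticeGraph d).Adj (a 0, Fin.tail a) (b 0, Fin.tail b)
  rw [boxProd_adj]
  rcases (by omega : (a 0 - b 0) ^ 2 = 1 ∧ ∑ k : Fin d, (a k.succ - b k.succ) ^ 2 = 0 ∨
      (a 0 - b 0) ^ 2 = 0 ∧ ∑ k : Fin d, (a k.succ - b k.succ) ^ 2 = 1) with ⟨h1, h2⟩ | ⟨h1, h2⟩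
  · exact Or.inl ⟨hasse_int_adj_of_sq_sub_eq_one h1, eq_of_sum_sq_sub_eq_zero h2⟩
  · exact Or.inr ⟨h2, sub_eq_zero.1 (pow_eq_zero_iff two_ne_zero |>.1 h1)⟩

theorem one_le_degWeight_latticeGraph (d : ℕ) (S : Finset (Fin d → ℤ)) (hS : S.Nonempty) :
    1 ≤ (latticeGraph d).degWeight S := by
  induction d with
  | zero =>
    refine one_le_degWeight_of_exists_card_adj_le_one
      (fun T hT => ⟨hT.choose, hT.choose_spec, ?_⟩) S hS
    simp [latticeGraph]
  | succ d ih =>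
    exact one_le_degWeight_of_le_comap (one_le_degWeight_boxProd one_le_degWeight_hasse ih)
      (Fin.consEquiv fun _ => ℤ).symm.toEmbedding (latticeGraph_succ_le_comap d) S hS

section EdgeSet

variable {α : Type*} [DecidableEq α] {E : Finset (Sym2 α)}

lemma mem_endpoints {x : α} : x ∈ endpoints E ↔ ∃ e ∈ E, x ∈ e := by
  simp only [endpoints, mem_biUnion]
  refine exists_congr fun e => and_congr_right fun _ => ?_
  induction e using Sym2.ind with
  | _ a b => simp

lemma edgeGraph_le_comap {G : SimpleGraph α} (hE : ∀ e ∈ E, e ∈ G.edgeSet) :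
    edgeGraph E ≤ G.comap Subtype.val :=
  fun _ _ h => hE _ h.2

lemma edgeDeg_le_degree (hE : ∀ e ∈ E, ¬e.IsDiag) (v : endpoints E) :
    edgeDeg E v ≤ (edgeGraph E).degree v := by
  rw [edgeDeg, ← card_neighborFinset_eq_degree]
  refine (card_le_card (t := ((edgeGraph E).neighborFinset v).image fun u => s(v.1, u.1))
    fun e he => ?_).trans card_image_le
  simp only [mem_filter] at he
  obtain ⟨heE, hve⟩ := he
  refine mem_image.2 ⟨⟨Sym2.Mem.other hve, mem_endpoints.2 ⟨e, heE, Sym2.other_mem hve⟩⟩, ?_,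
    Sym2.other_spec hve⟩
  rw [mem_neighborFinset]
  exact ⟨(Sym2.other_ne (hE e heE) hve).symm, (Sym2.other_spec hve).symm ▸ heE⟩

theorem card_connectedComponent_edgeGraph_le {G : SimpleGraph α}
    (hG : ∀ S : Finset α, S.Nonempty → 1 ≤ G.degWeight S) (hE : ∀ e ∈ E, e ∈ G.edgeSet) :
    (Nat.card (edgeGraph E).ConnectedComponent : ℝ) ≤
      ∑ v ∈ endpoints E, ((2 : ℝ) ^ edgeDeg E v)⁻¹ := by
  calc (Nat.card (edgeGraph E).ConnectedComponent : ℝ)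
      ≤ ∑ v, ((2 : ℝ) ^ (edgeGraph E).degree v)⁻¹ := card_connectedComponent_le_sum
        (one_le_degWeight_of_le_comap hG (Function.Embedding.subtype _) (edgeGraph_le_comap hE))
    _ ≤ ∑ v : endpoints E, ((2 : ℝ) ^ edgeDeg E v)⁻¹ :=
        sum_le_sum fun v _ => inv_pow_le_inv_pow_of_le one_le_two
          (edgeDeg_le_degree (fun e he => G.not_isDiag_of_mem_edgeSet (hE e he)) v)
    _ = ∑ v ∈ endpoints E, ((2 : ℝ) ^ edgeDeg E v)⁻¹ :=
        sum_coe_sort (endpoints E) fun v => ((2 : ℝ) ^ edgeDeg E v)⁻¹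

end EdgeSet

theorem card_components_le_sum_two_pow_neg_deg_general (d : ℕ)
    (E : Finset (Sym2 (Fin d → ℤ)))
    (hNN : ∀ e ∈ E, ∃ a b : Fin d → ℤ,
      e = s(a, b) ∧ ∑ k : Fin d, (a k - b k) ^ 2 = 1) :
    (Nat.card (edgeGraph E).ConnectedComponent : ℝ) ≤
      ∑ v ∈ endpoints E, ((2 : ℝ) ^ edgeDeg E v)⁻¹ := by
  refine card_connectedComponent_edgeGraph_le (one_le_degWeight_latticeGraph d) fun e he => ?_
  obtain ⟨a, b, rfl, hab⟩ := hNN e he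
  exact hab

/-- Component-counting bound on `ℤ^d`: if `E` is a finite nonempty set of
nearest-neighbour edges of the lattice `ℤ^d` (`d ≥ 2`), then the number of
connected components of the graph `(V(E), E)` is at most
`∑_{v ∈ V(E)} 2^{-deg_E(v)}`. -/
theorem card_components_le_sum_two_pow_neg_deg (d : ℕ) (hd : 2 ≤ d)
    (E : Finset (Sym2 (Fin d → ℤ))) (hEne : E.Nonempty)
    (hNN : ∀ e ∈ E, ∃ a b : Fin d → ℤ,
      e = s(a, b) ∧ ∑ k : Fin d, (a k - b k) ^ 2 = 1) :
    (Nat.card (edgeGraph E).ConnectedComponent : ℝ) ≤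
      ∑ v ∈ endpoints E, ((2 : ℝ) ^ edgeDeg E v)⁻¹ :=
  card_components_le_sum_two_pow_neg_deg_general d E hNN

end
end
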